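/- Let n ≥ 3. There exist no real a > 0 and integer s with 0 ≤ s ≤ n-1 such that the orbit v_{a,s}^{B_n} is a spherical 9-design. -/

import Mathlib

open MeasureTheory

/-- The generalized corner vector `v_{a,s} = (a^2+s)^{-1/2} (a,1,...,1,0,...,0)`
(with `s` ones after the first coordinate `a`) in `ℝ^n`. -/
noncomputable def cornerVec (n : ℕ) (a : ℝ) (s : ℕ) : EuclideanSpace ℝ (Fin n) :=
  WithLp.toLp 2 fun (i : Fin n) => (Real.sqrt (a ^ 2 + s))⁻¹ *
    (if (i : ℕ) = 0 then a else if (i : ℕ) ≤ s then 1 else 0)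

/-- The orbit `v_{a,s}^{B_n}` of the generalized corner vector under the
hyperoctahedral group (coordinate permutations and sign changes). -/
noncomputable def cornerOrbit (n : ℕ) (a : ℝ) (s : ℕ) : Finset (EuclideanSpace ℝ (Fin n)) :=
  @Finset.image _ _ (Classical.decEq _)
    (fun p : Equiv.Perm (Fin n) × (Fin n → Bool) =>
      (WithLp.toLp 2 fun i => (if p.2 i then (-1 : ℝ) else 1) * cornerVec n a s (p.1 i) :
        EuclideanSpace ℝ (Fin n)))
    Finset.univ

/-- The average `(1/|S^{n-1}|) ∫_{S^{n-1}} f dρ` of a polynomial over the unit sphere,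
with respect to the surface ((n-1)-dimensional Hausdorff) measure. -/
noncomputable def sphereAvg (n : ℕ) (f : MvPolynomial (Fin n) ℝ) : ℝ :=
  ⨍ x in Metric.sphere (0 : EuclideanSpace ℝ (Fin n)) 1,
    MvPolynomial.eval (fun i => x i) f ∂ μH[(n : ℝ) - 1]

/-- The sum `Σ_{x ∈ v_{a,s}^{B_n}} f(x)`. -/
noncomputable def orbitSum (n : ℕ) (a : ℝ) (s : ℕ) (f : MvPolynomial (Fin n) ℝ) : ℝ :=
  ∑ y ∈ cornerOrbit n a s, MvPolynomial.eval (fun i => y i) f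

/-- The orbit `v_{a,s}^{B_n}` is an (equi-weighted) spherical `t`-design. -/
def isOrbitDesign (n : ℕ) (a : ℝ) (s : ℕ) (t : ℕ) : Prop :=
  ∀ f : MvPolynomial (Fin n) ℝ, f.totalDegree ≤ t →
    sphereAvg n f = ((cornerOrbit n a s).card : ℝ)⁻¹ * orbitSum n a s f

/-!
The power sum `∑ xᵢ⁴` is invariant under `B_n`, so it takes a single value `c` on every
`B_n`-orbit. If an orbit were an 8-design, the nonnegative degree-8 polynomial `(∑ xᵢ⁴ - c)²`
would average to zero over the sphere, hence vanish almost everywhere for the surface measure.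
Nonempty relatively open subsets of the sphere have positive surface measure (the coordinate
projection of the upper hemisphere onto `ℝ^{n-1}` is 1-Lipschitz and maps them onto open
sets), so `∑ xᵢ⁴ = c` on an open hemisphere. But `∑ xᵢ⁴` equals `1` at `e₁` and `1/n` at
`(1, …, 1)/√n`. A 9-design is in particular an 8-design.
-/

open Metric
open scoped ENNReal NNReal

theorem EuclideanSpace.norm_eq_one_iff_sum_sq {ι : Type*} [Fintype ι] (x : EuclideanSpace ℝ ι) :
    ‖x‖ = 1 ↔ ∑ i, x i ^ 2 = 1 := by
  rw [← EuclideanSpace.real_norm_sq_eq, pow_eq_one_iff_of_nonneg (norm_nonneg _) two_ne_zero]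

theorem hausdorffMeasure_pos_of_isOpen_subset_image {X ι : Type*} [EMetricSpace X]
    [MeasurableSpace X] [BorelSpace X] [Fintype ι] {K : ℝ≥0} {f : X → ι → ℝ}
    (hf : LipschitzWith K f) {A : Set X} {U : Set (ι → ℝ)} (hU : IsOpen U) (hne : U.Nonempty)
    (hUA : U ⊆ f '' A) : 0 < μH[Fintype.card ι] A := by
  have hU_pos : 0 < μH[Fintype.card ι] U := by
    rw [hausdorffMeasure_pi_real]
    exact hU.measure_pos volume hne
  refine pos_iff_ne_zero.2 fun hA => hU_pos.ne' (le_antisymm ?_ bot_le)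
  calc μH[Fintype.card ι] U ≤ μH[Fintype.card ι] (f '' A) := measure_mono hUA
    _ ≤ (K : ℝ≥0∞) ^ (Fintype.card ι : ℝ) * μH[Fintype.card ι] A :=
      hf.hausdorffMeasure_image_le (Nat.cast_nonneg _) A
    _ = 0 := by rw [hA, mul_zero]

theorem hausdorffMeasure_inter_sphere_pos {m : ℕ} {V : Set (EuclideanSpace ℝ (Fin (m + 1)))}
    (hV : IsOpen V) {x₀ : EuclideanSpace ℝ (Fin (m + 1))} (hx₀V : x₀ ∈ V) (hx₀ : ‖x₀‖ = 1)
    (hx₀0 : 0 < x₀ 0) : 0 < μH[m] (V ∩ sphere 0 1) := by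
  let proj : EuclideanSpace ℝ (Fin (m + 1)) → Fin m → ℝ := fun x j => x j.succ
  let lift : (Fin m → ℝ) → EuclideanSpace ℝ (Fin (m + 1)) := fun y =>
    WithLp.toLp 2 (Fin.cons (√(1 - ∑ j, y j ^ 2)) y)
  have hproj : LipschitzWith 1 proj := LipschitzWith.of_dist_le_mul fun x y => by
    simpa using (dist_pi_le_iff dist_nonneg).2 fun j : Fin m => PiLp.dist_apply_le x y j.succ
  have hlift : Continuous lift := by
    refine (PiLp.continuous_toLp 2 _).comp (continuous_pi fun i => ?_)
    induction i using Fin.cases with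
    | zero => exact (continuous_const.sub (by fun_prop)).sqrt
    | succ j => exact continuous_apply j
  have hnorm_lift (y : Fin m → ℝ) (hy : ∑ j, y j ^ 2 ≤ 1) : ‖lift y‖ = 1 := by
    rw [EuclideanSpace.norm_eq_one_iff_sum_sq, Fin.sum_univ_succ]
    simp [lift, Real.sq_sqrt (sub_nonneg.2 hy)]
  have hproj_lift (y : Fin m → ℝ) : proj (lift y) = y := rfl
  have hsum : ∑ j, proj x₀ j ^ 2 = 1 - x₀ 0 ^ 2 := by
    have := (EuclideanSpace.norm_eq_one_iff_sum_sq x₀).1 hx₀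
    rw [Fin.sum_univ_succ] at this
    simp only [proj]; linarith
  have hlift_proj : lift (proj x₀) = x₀ := by
    ext i
    induction i using Fin.cases with
    | zero => simp [lift, hsum, Real.sqrt_sq hx₀0.le]
    | succ j => rfl
  let U : Set (Fin m → ℝ) := {y | ∑ j, y j ^ 2 < 1} ∩ lift ⁻¹' V
  have hx₀U : proj x₀ ∈ U :=
    ⟨show ∑ j, proj x₀ j ^ 2 < 1 by rw [hsum]; nlinarith, by simpa [hlift_proj] using hx₀V⟩
  have hU_sub : U ⊆ proj '' (V ∩ sphere 0 1) := fun y hy =>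
    ⟨lift y, ⟨hy.2, by simpa using hnorm_lift y hy.1.le⟩, hproj_lift y⟩
  simpa using hausdorffMeasure_pos_of_isOpen_subset_image hproj
    ((isOpen_lt (by fun_prop) continuous_const).inter (hV.preimage hlift)) ⟨_, hx₀U⟩ hU_sub

theorem isOrbitDesign.mono {n : ℕ} {a : ℝ} {s t t' : ℕ} (h : isOrbitDesign n a s t)
    (ht : t' ≤ t) : isOrbitDesign n a s t' :=
  fun f hf => h f (hf.trans ht)

-- `cornerOrbit` is an image under `Classical.decEq`, not under the instance of `EuclideanSpace`.
theorem cornerOrbit_nonempty (n : ℕ) (a : ℝ) (s : ℕ) : (cornerOrbit n a s).Nonempty :=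
  @Finset.Nonempty.image _ _ (Classical.decEq _) _ Finset.univ_nonempty _

theorem sum_pow_of_mem_cornerOrbit {n : ℕ} {a : ℝ} {s k : ℕ} (hk : Even k)
    {y : EuclideanSpace ℝ (Fin n)} (hy : y ∈ cornerOrbit n a s) :
    ∑ i, y i ^ k = ∑ i, cornerVec n a s i ^ k := by
  classical
  simp only [cornerOrbit, Finset.mem_image, Finset.mem_univ, true_and] at hy
  obtain ⟨⟨σ, ε⟩, rfl⟩ := hy
  simp only [mul_pow, apply_ite (· ^ k), hk.neg_one_pow, one_pow, ite_self, one_mul]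
  exact Equiv.sum_comp σ fun j => cornerVec n a s j ^ k

-- The design identity for `f = 1` rules out surface measure `0` or `∞`, for which the set
-- average would be the junk value `0`.
theorem isOrbitDesign.measureReal_sphere_pos {n : ℕ} {a : ℝ} {s t : ℕ}
    (h : isOrbitDesign n a s t) :
    0 < μH[(n : ℝ) - 1].real (sphere (0 : EuclideanSpace ℝ (Fin n)) 1) := by
  have hcard : ((cornerOrbit n a s).card : ℝ) ≠ 0 := by
    exact_mod_cast (cornerOrbit_nonempty n a s).card_pos.ne'
  have h1 := h 1 (by simp)
  simp only [sphereAvg, orbitSum, map_one, Finset.sum_const, nsmul_eq_mul, mul_one,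
    inv_mul_cancel₀ hcard, setAverage_eq, setIntegral_const, smul_eq_mul] at h1
  refine (measureReal_nonneg).lt_of_ne fun h0 => ?_
  rw [← h0] at h1
  simp at h1

theorem measure_inter_ne_zero_eq_zero_of_setAverage_eq_zero {X : Type*} [TopologicalSpace X]
    [T2Space X] [MeasurableSpace X] [OpensMeasurableSpace X] {μ : Measure X} {S : Set X}
    (hS : IsCompact S) (hμS : 0 < μ.real S) {g : X → ℝ} (hg : Continuous g) (hg0 : 0 ≤ g)
    (havg : ⨍ x in S, g x ∂μ = 0) : μ ({x | g x ≠ 0} ∩ S) = 0 := by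
  have hint : ∫ x in S, g x ∂μ = 0 := by
    rwa [setAverage_eq, smul_eq_zero, inv_eq_zero, or_iff_right hμS.ne'] at havg
  obtain ⟨C, hC⟩ := hS.exists_bound_of_continuousOn hg.continuousOn
  have hg_int : IntegrableOn g S μ :=
    .of_bound (ENNReal.toReal_pos_iff.1 hμS).2 hg.aestronglyMeasurable C
      (ae_restrict_of_forall_mem hS.measurableSet hC)
  have hae := (integral_eq_zero_iff_of_nonneg hg0 hg_int).1 hint
  rwa [← Measure.restrict_apply (isOpen_ne_fun hg continuous_const).measurableSet]

theorem isOrbitDesign.eval_eq_of_forall_mem_cornerOrbit {m : ℕ} {a : ℝ} {s t : ℕ}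
    (h : isOrbitDesign (m + 1) a s t) {p : MvPolynomial (Fin (m + 1)) ℝ}
    (hp : 2 * p.totalDegree ≤ t) {c : ℝ}
    (hc : ∀ y ∈ cornerOrbit (m + 1) a s, MvPolynomial.eval (fun i => y i) p = c)
    {x : EuclideanSpace ℝ (Fin (m + 1))} (hx : ‖x‖ = 1) (hx0 : 0 < x 0) :
    MvPolynomial.eval (fun i => x i) p = c := by
  set g : EuclideanSpace ℝ (Fin (m + 1)) → ℝ :=
    fun x => (MvPolynomial.eval (fun i => x i) p - c) ^ 2
  have hg : Continuous g :=
    (((MvPolynomial.continuous_eval p).comp (PiLp.continuous_ofLp 2 _)).sub continuous_const).pow 2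
  have hdim : ((m + 1 : ℕ) : ℝ) - 1 = m := by push_cast; ring
  have havg : ⨍ x in sphere 0 1, g x ∂μH[(m : ℝ)] = 0 := by
    have := h ((p - MvPolynomial.C c) ^ 2)
      ((MvPolynomial.totalDegree_pow _ _).trans (by grw [MvPolynomial.totalDegree_sub_C_le, hp]))
    have horbit : orbitSum (m + 1) a s ((p - MvPolynomial.C c) ^ 2) = 0 :=
      Finset.sum_eq_zero fun y hy => by simp [hc y hy]
    simpa [horbit, sphereAvg, hdim] using this
  have hnull := measure_inter_ne_zero_eq_zero_of_setAverage_eq_zero (isCompact_sphere 0 1)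
    (hdim ▸ h.measureReal_sphere_pos) hg (fun _ => sq_nonneg _) havg
  by_contra hne
  exact (hausdorffMeasure_inter_sphere_pos (isOpen_ne_fun hg continuous_const)
    (x₀ := x) (by simpa [g, sub_eq_zero] using hne) hx hx0).ne' hnull

theorem exists_norm_eq_one_sum_pow_four_ne {m : ℕ} (hm : 1 ≤ m) (c : ℝ) :
    ∃ x : EuclideanSpace ℝ (Fin (m + 1)), ‖x‖ = 1 ∧ 0 < x 0 ∧ ∑ i, x i ^ 4 ≠ c := by
  by_cases hc : c = 1
  · set N : ℝ := m + 1
    have hN : 0 < N := by positivity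
    have hsq : √N ^ 2 = N := Real.sq_sqrt hN.le
    refine ⟨WithLp.toLp 2 fun _ => (√N)⁻¹, ?_, by simpa using hN, ?_⟩
    · rw [EuclideanSpace.norm_eq_one_iff_sum_sq]
      simp [inv_pow, hsq, N, hN.ne']
    · have h2 : (2 : ℝ) ≤ N := by simp only [N]; norm_cast; omega
      have : ∑ _i : Fin (m + 1), (√N)⁻¹ ^ 4 = N⁻¹ := by
        rw [show (√N)⁻¹ ^ 4 = (√N ^ 2)⁻¹ ^ 2 by ring, hsq]
        simp [N]; field_simp
      simp only [this, hc]
      exact (inv_lt_one_of_one_lt₀ (by linarith)).ne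
  · refine ⟨EuclideanSpace.single 0 1, by simp, by simp, ?_⟩
    simpa [PiLp.single_apply, ite_pow] using Ne.symm hc

theorem not_isOrbitDesign_eight {m : ℕ} (hm : 1 ≤ m) (a : ℝ) (s : ℕ) :
    ¬ isOrbitDesign (m + 1) a s 8 := by
  intro h
  let p4 : MvPolynomial (Fin (m + 1)) ℝ := ∑ i, MvPolynomial.X i ^ 4
  have hp4 : 2 * p4.totalDegree ≤ 8 := by
    have : p4.totalDegree ≤ 4 := (MvPolynomial.totalDegree_finsetSum _ _).trans <|
      Finset.sup_le fun i _ => (MvPolynomial.totalDegree_X_pow i 4).le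
    omega
  obtain ⟨x, hx, hx0, hne⟩ :=
    exists_norm_eq_one_sum_pow_four_ne hm (∑ i, cornerVec (m + 1) a s i ^ 4)
  refine hne ?_
  simpa [p4] using h.eval_eq_of_forall_mem_cornerOrbit hp4
    (fun y hy => by simpa [p4] using sum_pow_of_mem_cornerOrbit (by decide) hy) hx hx0

/-- There are no single-orbit 9-designs. -/
theorem no_single_orbit_nine_design (n : ℕ) (hn : 3 ≤ n) :
    ¬ ∃ (a : ℝ) (s : ℕ), 0 < a ∧ s ≤ n - 1 ∧ isOrbitDesign n a s 9 := by
  rintro ⟨a, s, -, -, h⟩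
  obtain ⟨m, rfl⟩ : ∃ m, n = m + 1 := ⟨n - 1, by omega⟩
  exact not_isOrbitDesign_eight (by omega) a s (h.mono (by norm_num))
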